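/- Let q_1,…,q_r be non-negative integers, β = ∑_{i=1}^r q_i·α_i, M = ∑_{i=1}^r q_i, and assume m_0 is a positive integer satisfying m_0 = k − (Λ − β − m_0·θ, θ) + 1. Set A = ∑_{i=1}^r a_i, N = M + m_0·A, and let π: {1,…,N} → {1,…,r} be any map with card(π^{−1}(i) ∩ {1,…,M}) = q_i and card(π^{−1}(i) ∩ {M+1,…,N}) = m_0·a_i for all i. Then ∑_{1≤i<j≤N, j>M} (α_{π(i)},α_{π(j)})/κ − ∑_{i=M+1}^{N} ∑_{s=1}^{n} (Λ_s,α_{π(i)})/κ = −m_0. -/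
import Mathlib


/- STATEMENT 13 (Lemma 3.4.4, general resonance computation).
Same setting as statement 12, with additionally non-negative integers `q_1,…,q_r`,
`β = ∑ q_i α_i`, `M = ∑ q_i`, and `m₀ = k − (Λ − β − m₀θ, θ) + 1`.  With `N = M + m₀·A`
and `π : [N] → [r]` such that the fiber over `i` meets `{1,…,M}` in `q_i` elements and
`{M+1,…,N}` in `m₀·a_i` elements (indices `0,…,N−1` in Lean, so the two ranges are
`p.val < M` and `M ≤ p.val`), one has
`∑_{i<j, j>M} (α_{π(i)},α_{π(j)})/κ − ∑_{i>M} ∑_s (Λ_s,α_{π(i)})/κ = −m₀`. -/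

private lemma fiber_sum13 {N r : ℕ} (π : Fin N → Fin r) (c : Fin N → Prop) [DecidablePred c]
    {V : Type*} [AddCommMonoid V] (F : Fin r → V) :
    ∑ p ∈ Finset.univ.filter c, F (π p)
      = ∑ i, ((Finset.univ.filter fun p => π p = i ∧ c p).card) • F i := by
  rw [← Finset.sum_fiberwise (Finset.univ.filter c) π (fun p => F (π p))]
  refine Finset.sum_congr rfl fun i _ => ?_
  have hset : (Finset.univ.filter c).filter (fun p => π p = i)
      = Finset.univ.filter fun p => π p = i ∧ c p := by
    ext p; simp [and_comm]
  rw [hset]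
  rw [Finset.sum_congr rfl (fun p hp => by
    rw [(Finset.mem_filter.mp hp).2.1]), Finset.sum_const]

theorem statement13 (H : Type) [AddCommGroup H] [Module ℂ H]
    (B : H →ₗ[ℂ] H →ₗ[ℂ] ℂ) (hB : ∀ x y, B x y = B y x)
    (r : ℕ) (hr : 0 < r) (α : Fin r → H)
    (acoef acov : Fin r → ℕ) (hacoef : ∀ i, 0 < acoef i) (hacov : ∀ i, 0 < acov i)
    (hαα : ∀ i, B (α i) (α i) = 2 * (acov i : ℂ) / (acoef i : ℂ))
    (θ : H) (hθ : θ = ∑ i, (acoef i : ℂ) • α i) (hθθ : B θ θ = 2)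
    (g : ℕ) (hg : g = (∑ i, acov i) + 1)
    (k : ℕ) (hk : 0 < k) (κ : ℂ) (hκ : κ = ((k : ℂ) + (g : ℂ)))
    (n : ℕ) (hn : 1 ≤ n) (Λs : Fin n → H) (Λ : H) (hΛ : Λ = ∑ s, Λs s)
    (qcoef : Fin r → ℕ) (β : H) (hβ : β = ∑ i, (qcoef i : ℂ) • α i)
    (M : ℕ) (hM : M = ∑ i, qcoef i)
    (m₀ : ℕ) (hm₀ : 0 < m₀)
    (hres : (m₀ : ℂ) = (k : ℂ) - B (Λ - β - (m₀ : ℂ) • θ) θ + 1)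
    (A N : ℕ) (hA : A = ∑ i, acoef i) (hN : N = M + m₀ * A)
    (π : Fin N → Fin r)
    (hπ1 : ∀ i, (Finset.univ.filter fun p : Fin N => π p = i ∧ p.val < M).card = qcoef i)
    (hπ2 : ∀ i, (Finset.univ.filter fun p : Fin N => π p = i ∧ M ≤ p.val).card
        = m₀ * acoef i) :
    (∑ p : Fin N, ∑ q : Fin N,
        if p < q ∧ M ≤ q.val then B (α (π p)) (α (π q)) / κ else 0)
      - (∑ p : Fin N, if M ≤ p.val then ∑ s : Fin n, B (Λs s) (α (π p)) / κ else 0)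
      = -(m₀ : ℂ) := by
  classical
  set S1 : Finset (Fin N) := Finset.univ.filter (fun p => p.val < M) with hS1def
  set S2 : Finset (Fin N) := Finset.univ.filter (fun p => M ≤ p.val) with hS2def
  -- sums of α over the two blocks
  have hS1 : ∑ p ∈ S1, α (π p) = β := by
    rw [hS1def, fiber_sum13]
    simp only [hπ1]
    rw [hβ]
    exact Finset.sum_congr rfl fun i _ => (Nat.cast_smul_eq_nsmul ℂ _ _).symm
  have hS2 : ∑ p ∈ S2, α (π p) = (m₀ : ℂ) • θ := by
    rw [hS2def, fiber_sum13]
    simp only [hπ2]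
    rw [hθ, Finset.smul_sum]
    refine Finset.sum_congr rfl fun i _ => ?_
    rw [smul_smul, ← Nat.cast_mul, Nat.cast_smul_eq_nsmul]
  -- diagonal sum
  have hD : ∑ p ∈ S2, B (α (π p)) (α (π p)) = 2 * (m₀ : ℂ) * ((g : ℂ) - 1) := by
    rw [hS2def, fiber_sum13 π _ (fun i => B (α i) (α i))]
    have : ∀ i : Fin r, (m₀ * acoef i) • B (α i) (α i) = 2 * (m₀ : ℂ) * (acov i : ℂ) := by
      intro i
      rw [hαα i, nsmul_eq_mul]
      have h0 : (acoef i : ℂ) ≠ 0 := Nat.cast_ne_zero.mpr (hacoef i).ne'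
      push_cast
      field_simp
    simp only [hπ2, this]
    rw [← Finset.mul_sum, hg]
    push_cast
    ring
  -- bilinear expansion of double sums
  have hbil : ∀ (s t : Finset (Fin N)),
      ∑ p ∈ s, ∑ q ∈ t, B (α (π p)) (α (π q))
        = B (∑ p ∈ s, α (π p)) (∑ q ∈ t, α (π q)) := by
    intro s t
    simp only [map_sum, LinearMap.sum_apply]
    exact Finset.sum_comm
  have hκ0 : κ ≠ 0 := by
    rw [hκ, ← Nat.cast_add, Nat.cast_ne_zero]
    omega
  -- pull out the division by κ
  have hX : (∑ p : Fin N, ∑ q : Fin N,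
        if p < q ∧ M ≤ q.val then B (α (π p)) (α (π q)) / κ else 0)
      = (∑ p : Fin N, ∑ q : Fin N,
        if p < q ∧ M ≤ q.val then B (α (π p)) (α (π q)) else 0) / κ := by
    rw [Finset.sum_div]
    refine Finset.sum_congr rfl fun p _ => ?_
    rw [Finset.sum_div]
    refine Finset.sum_congr rfl fun q _ => ?_
    split <;> simp
  have hY : (∑ p : Fin N, if M ≤ p.val then ∑ s : Fin n, B (Λs s) (α (π p)) / κ else 0)
      = (∑ p : Fin N, if M ≤ p.val then ∑ s : Fin n, B (Λs s) (α (π p)) else 0) / κ := by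
    rw [Finset.sum_div]
    refine Finset.sum_congr rfl fun p _ => ?_
    split <;> simp [Finset.sum_div]
  rw [hX, hY]
  -- compute Y
  have hYval : (∑ p : Fin N, if M ≤ p.val then ∑ s : Fin n, B (Λs s) (α (π p)) else 0)
      = (m₀ : ℂ) * B Λ θ := by
    rw [← Finset.sum_filter, ← hS2def, Finset.sum_comm]
    have : ∀ s : Fin n, ∑ p ∈ S2, B (Λs s) (α (π p)) = B (Λs s) ((m₀ : ℂ) • θ) := by
      intro s
      rw [← map_sum, hS2]
    simp only [this]
    rw [← LinearMap.sum_apply, ← map_sum, ← hΛ, map_smul, smul_eq_mul]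
  rw [hYval]
  -- compute X
  have hXval : (∑ p : Fin N, ∑ q : Fin N,
        if p < q ∧ M ≤ q.val then B (α (π p)) (α (π q)) else 0)
      = (m₀ : ℂ) * B β θ + ((m₀ : ℂ)^2 * 2 - 2 * (m₀ : ℂ) * ((g : ℂ) - 1)) / 2 := by
    have hsumform : ∀ p : Fin N, (∑ q : Fin N,
        if p < q ∧ M ≤ q.val then B (α (π p)) (α (π q)) else 0)
        = ∑ q ∈ Finset.univ.filter (fun q : Fin N => p < q ∧ M ≤ q.val),
            B (α (π p)) (α (π q)) := fun p => (Finset.sum_filter _ _).symm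
    simp only [hsumform]
    rw [← Finset.sum_filter_add_sum_filter_not Finset.univ (fun p : Fin N => p.val < M)]
    have hnotS1 : Finset.univ.filter (fun p : Fin N => ¬ p.val < M) = S2 := by
      ext p; simp [hS2def, not_lt]
    rw [hnotS1, ← hS1def]
    -- cross term
    have hcross : ∑ p ∈ S1, ∑ q ∈ Finset.univ.filter (fun q : Fin N => p < q ∧ M ≤ q.val),
        B (α (π p)) (α (π q)) = (m₀ : ℂ) * B β θ := by
      have : ∀ p ∈ S1, Finset.univ.filter (fun q : Fin N => p < q ∧ M ≤ q.val) = S2 := by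
        intro p hp
        have hpM : p.val < M := by simpa [hS1def] using hp
        ext q
        simp only [Finset.mem_filter, Finset.mem_univ, true_and, hS2def]
        constructor
        · exact fun h => h.2
        · intro h; exact ⟨Fin.lt_def.mpr (lt_of_lt_of_le hpM h), h⟩
      rw [Finset.sum_congr rfl fun p hp => by rw [this p hp], hbil, hS1, hS2,
        map_smul, smul_eq_mul]
    -- the S2 × S2 part
    have hsetP : ∀ p ∈ S2, Finset.univ.filter (fun q : Fin N => p < q ∧ M ≤ q.val)
        = S2.filter (fun q => p < q) := by
      intro p _
      ext q
      simp only [Finset.mem_filter, Finset.mem_univ, true_and, hS2def]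
      tauto
    rw [hcross, Finset.sum_congr rfl fun p hp => by rw [hsetP p hp]]
    have hfull : ∑ p ∈ S2, ∑ q ∈ S2, B (α (π p)) (α (π q)) = (m₀ : ℂ)^2 * 2 := by
      rw [hbil, hS2]
      simp only [map_smul, LinearMap.smul_apply, smul_eq_mul, hθθ]
      ring
    have hswap : (∑ p ∈ S2, ∑ q ∈ S2.filter (fun q => q < p), B (α (π p)) (α (π q)))
        = ∑ p ∈ S2, ∑ q ∈ S2.filter (fun q => p < q), B (α (π p)) (α (π q)) := by
      have hc : ∀ p q : Fin N, p ∈ S2 ∧ q ∈ S2.filter (fun q => q < p)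
          ↔ p ∈ S2.filter (fun p => q < p) ∧ q ∈ S2 := by
        intro p q
        simp only [Finset.mem_filter]
        tauto
      rw [Finset.sum_comm' hc]
      exact Finset.sum_congr rfl fun q _ => Finset.sum_congr rfl fun p _ => hB _ _
    have hins : ∀ p ∈ S2, S2.filter (fun q => ¬ p < q)
        = insert p (S2.filter (fun q => q < p)) := by
      intro p hp
      have hpM : M ≤ p.val := by simpa [hS2def] using hp
      ext q
      simp only [Finset.mem_filter, Finset.mem_insert, hS2def, Finset.mem_univ, true_and,
        Fin.lt_def, Fin.ext_iff, not_lt]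
      omega
    have hsplit2 : ∑ p ∈ S2, ∑ q ∈ S2, B (α (π p)) (α (π q))
        = (∑ p ∈ S2, ∑ q ∈ S2.filter (fun q => p < q), B (α (π p)) (α (π q)))
          + ((∑ p ∈ S2, B (α (π p)) (α (π p)))
            + ∑ p ∈ S2, ∑ q ∈ S2.filter (fun q => q < p), B (α (π p)) (α (π q))) := by
      rw [← Finset.sum_add_distrib, ← Finset.sum_add_distrib]
      refine Finset.sum_congr rfl fun p hp => ?_
      rw [← Finset.sum_filter_add_sum_filter_not S2 (fun q => p < q), hins p hp,
        Finset.sum_insert (by simp)]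
    rw [hswap] at hsplit2
    rw [hfull, hD] at hsplit2
    linear_combination -hsplit2 / 2
  rw [hXval]
  have hres' : B Λ θ - B β θ = (k : ℂ) + (m₀ : ℂ) + 1 := by
    have h2 : B (Λ - β - (m₀ : ℂ) • θ) θ = B Λ θ - B β θ - (m₀ : ℂ) * B θ θ := by
      simp [map_sub, map_smul, LinearMap.sub_apply, LinearMap.smul_apply, smul_eq_mul]
    rw [h2, hθθ] at hres
    linear_combination hres
  have hnum : (m₀ : ℂ) * B β θ + ((m₀ : ℂ)^2 * 2 - 2 * (m₀ : ℂ) * ((g : ℂ) - 1)) / 2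
      - (m₀ : ℂ) * B Λ θ = -(m₀ : ℂ) * κ := by
    rw [hκ]
    linear_combination (-(m₀ : ℂ)) * hres'
  rw [div_sub_div_same, hnum, neg_mul, neg_div, mul_div_assoc, div_self hκ0, mul_one]
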